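/- arXiv:0911.1875 — 3 statements merged into one kernel-verified Lean document; each statement's English description precedes it below -/
import Mathlib

section
/- The function I : [0, ∞) → ℝ is continuous, and I(t) ≥ 0 for every t ≥ 0. -/
open MeasureTheory Real intervalIntegral

/-- `log⁺ r = log (max 1 r)`. -/
noncomputable def logPlus (r : ℝ) : ℝ := Real.log (max 1 r)

/-- `I(t) = ∫₀¹ log⁺ |t + e^{2πiθ}| dθ − log⁺ t`. -/
noncomputable def Ifun (t : ℝ) : ℝ :=
  (∫ θ in (0:ℝ)..1, logPlus ‖(t : ℂ) + Complex.exp (2 * Real.pi * Complex.I * θ)‖)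
    - logPlus t

/-!
Jensen's formula gives that the average of `log |t + z|` over the unit circle is `log⁺ t`; since
`log ≤ log⁺`, the average of `log⁺ |t + z|` is at least `log⁺ t`. Continuity holds because the
integrand is jointly continuous in `(t, θ)`.
-/

lemma continuous_logPlus : Continuous logPlus :=
  (continuous_const.max continuous_id).log fun r ↦ (one_pos.trans_le (le_max_left 1 r)).ne'

lemma logPlus_eq_posLog {r : ℝ} (hr : 0 ≤ r) : logPlus r = log⁺ r :=
  (posLog_eq_log_max_one hr).symm

lemma intervalIntegral_comp_exp_eq_circleAverage {E : Type*} [NormedAddCommGroup E]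
    [NormedSpace ℝ E] (f : ℂ → E) :
    ∫ θ in (0:ℝ)..1, f (Complex.exp (2 * π * Complex.I * θ)) = circleAverage f 0 1 := by
  have h2π : (2 * π) ≠ 0 := by positivity
  have hexp (θ : ℝ) : Complex.exp (2 * π * Complex.I * θ) = circleMap 0 1 (2 * π * θ) := by
    simp only [circleMap, Complex.ofReal_one, one_mul, zero_add]
    push_cast
    ring_nf
  simp_rw [hexp, circleAverage_def, intervalIntegral.integral_comp_mul_left
    (fun θ ↦ f (circleMap 0 1 θ)) h2π, mul_zero, mul_one]

theorem continuous_Ifun : Continuous Ifun := by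
  have hF : Continuous (Function.uncurry fun (t θ : ℝ) ↦
      logPlus ‖(t : ℂ) + Complex.exp (2 * π * Complex.I * θ)‖) :=
    continuous_logPlus.comp (by fun_prop)
  exact (continuous_parametric_intervalIntegral_of_continuous' hF 0 1).sub continuous_logPlus

lemma Ifun_eq_circleAverage {t : ℝ} (ht : 0 ≤ t) :
    Ifun t = circleAverage (fun z ↦ log⁺ ‖(t : ℂ) + z‖) 0 1 - log⁺ ‖(t : ℂ)‖ := by
  rw [Ifun, ← intervalIntegral_comp_exp_eq_circleAverage, Complex.norm_real, Real.norm_eq_abs,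
    posLog_abs, logPlus_eq_posLog ht]
  simp only [logPlus_eq_posLog (norm_nonneg _)]

theorem posLog_norm_le_circleAverage_posLog_norm_add (a : ℂ) :
    log⁺ ‖a‖ ≤ circleAverage (fun z ↦ log⁺ ‖a + z‖) 0 1 := by
  calc log⁺ ‖a‖ = circleAverage (log ‖· + a‖) 0 1 :=
        (circleAverage_log_norm_add_const_eq_posLog).symm
    _ ≤ circleAverage (fun z ↦ log⁺ ‖a + z‖) 0 1 := by
        refine circleAverage_mono ?_ ?_ fun z _ ↦ ?_
        · simpa using circleIntegrable_log_norm_sub_const (a := -a) (c := 0) 1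
        · exact (Continuous.continuousOn (by fun_prop)).circleIntegrable zero_le_one
        · rw [add_comm]; exact le_max_right _ _

theorem stmt1 :
    ContinuousOn Ifun (Set.Ici (0:ℝ)) ∧ ∀ t : ℝ, 0 ≤ t → 0 ≤ Ifun t := by
  refine ⟨continuous_Ifun.continuousOn, fun t ht ↦ ?_⟩
  rw [Ifun_eq_circleAverage ht, sub_nonneg]
  exact posLog_norm_le_circleAverage_posLog_norm_add t
end

section
/- Let K be a field with a multiplicative nonarchimedean absolute value ‖·‖, let c, x ∈ K with ‖c‖ > 1 and ‖x‖² ≠ ‖c‖, and let ψ_c(z) = z² + c. Then ‖ψ_c^k(x)‖ → +∞ as k → ∞. (Equivalently, the filled Julia set {x ∈ K : ‖ψ_c^k(x)‖ does not tend to ∞} is contained in the circle {x : ‖x‖² = ‖c‖}.) -/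
/-!
In an ultrametric field the norm of `y ^ 2 + c` is the larger of `‖y‖ ^ 2` and `‖c‖` whenever
these differ. Hence if `‖y‖ ^ 2 > ‖c‖ ≥ 1`, then `‖ψ_c y‖ = ‖y‖ ^ 2` is again in this region, and
`‖ψ_c^k y‖ = ‖y‖ ^ 2 ^ k → ∞`. If instead `‖x‖ ^ 2 < ‖c‖`, then `‖ψ_c x‖ = ‖c‖`, and
`‖c‖ ^ 2 > ‖c‖` puts `ψ_c x` in the escaping region after one step.
-/

open Filter

section

variable {K : Type*} [NormedDivisionRing K] [IsUltrametricDist K]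

lemma norm_sq_add_eq_of_norm_lt {c y : K} (h : ‖c‖ < ‖y‖ ^ 2) : ‖y ^ 2 + c‖ = ‖y‖ ^ 2 := by
  rw [IsUltrametricDist.norm_add_eq_max_of_norm_ne_norm (by rw [norm_pow]; exact h.ne'),
    norm_pow, max_eq_left h.le]

lemma norm_sq_add_eq_of_lt_norm {c y : K} (h : ‖y‖ ^ 2 < ‖c‖) : ‖y ^ 2 + c‖ = ‖c‖ := by
  rw [IsUltrametricDist.norm_add_eq_max_of_norm_ne_norm (by rw [norm_pow]; exact h.ne),
    norm_pow, max_eq_right h.le]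

lemma norm_iterate_sq_add_of_norm_lt {c y : K} (hc : 1 ≤ ‖c‖) (hy : ‖c‖ < ‖y‖ ^ 2) (k : ℕ) :
    ‖(fun z : K => z ^ 2 + c)^[k] y‖ = ‖y‖ ^ 2 ^ k := by
  induction k generalizing y with
  | zero => simp
  | succ k ih =>
    have hstep : ‖y ^ 2 + c‖ = ‖y‖ ^ 2 := norm_sq_add_eq_of_norm_lt hy
    have hescape : ‖c‖ < ‖y ^ 2 + c‖ ^ 2 := by rw [hstep]; nlinarith
    rw [Function.iterate_succ_apply, ih hescape, hstep, ← pow_mul, pow_succ']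

lemma tendsto_norm_iterate_sq_add_of_norm_lt {c y : K} (hc : 1 ≤ ‖c‖) (hy : ‖c‖ < ‖y‖ ^ 2) :
    Tendsto (fun k : ℕ => ‖(fun z : K => z ^ 2 + c)^[k] y‖) atTop atTop := by
  have hy1 : 1 < ‖y‖ := (one_lt_sq_iff₀ (norm_nonneg y)).mp (hc.trans_lt hy)
  simp_rw [norm_iterate_sq_add_of_norm_lt hc hy]
  exact (tendsto_pow_atTop_atTop_of_one_lt hy1).comp (tendsto_pow_atTop_atTop_of_one_lt one_lt_two)

end

theorem stmt13 (K : Type*) [NormedField K] [IsUltrametricDist K]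
    (c x : K) (hc : 1 < ‖c‖) (hx : ‖x‖ ^ 2 ≠ ‖c‖) :
    Tendsto (fun k : ℕ => ‖(fun z : K => z ^ 2 + c)^[k] x‖) atTop atTop := by
  rcases hx.lt_or_gt with hsmall | hlarge
  · have hstep : ‖x ^ 2 + c‖ = ‖c‖ := norm_sq_add_eq_of_lt_norm hsmall
    have hescape : ‖c‖ < ‖x ^ 2 + c‖ ^ 2 := by rw [hstep]; nlinarith
    rw [← tendsto_add_atTop_iff_nat 1]
    simpa only [Function.iterate_succ_apply] using
      tendsto_norm_iterate_sq_add_of_norm_lt hc.le hescape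
  · exact tendsto_norm_iterate_sq_add_of_norm_lt hc.le hlarge
end

section
/- Let K be a field with a multiplicative nonarchimedean absolute value ‖·‖ in which 4 = 1+1+1+1 ≠ 0, and let a, b, x ∈ K with ‖a‖ ≤ 1, ‖b‖ ≤ 1, and ‖x‖ > 1. Then 4·x·(x − a)·(x + b) ≠ 0, and the Lattès-map value ψ_E(x) = (x² + ab)² / (4x(x − a)(x + b)) satisfies ‖ψ_E(x)‖ = ‖x‖ / ‖4‖; in particular ‖ψ_E(x)‖ ≥ ‖x‖ > 1. -/
theorem stmt15 (K : Type*) [NormedField K] [IsUltrametricDist K]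
    (h4 : (4 : K) ≠ 0) (a b x : K)
    (ha : ‖a‖ ≤ 1) (hb : ‖b‖ ≤ 1) (hx : 1 < ‖x‖) :
    4 * x * (x - a) * (x + b) ≠ 0 ∧
    ‖(x ^ 2 + a * b) ^ 2 / (4 * x * (x - a) * (x + b))‖ = ‖x‖ / ‖(4 : K)‖ ∧
    ‖x‖ ≤ ‖(x ^ 2 + a * b) ^ 2 / (4 * x * (x - a) * (x + b))‖ := by
  have hx0 : (0:ℝ) < ‖x‖ := lt_trans one_pos hx
  have hna : ‖-a‖ ≠ ‖x‖ := by rw [norm_neg]; exact ne_of_lt (lt_of_le_of_lt ha hx)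
  have hxa : ‖x - a‖ = ‖x‖ := by
    rw [sub_eq_add_neg, add_comm, IsUltrametricDist.norm_add_eq_max_of_norm_ne_norm hna,
      max_eq_right (le_of_lt (lt_of_le_of_lt ((norm_neg a).le.trans ha) hx))]
  have hxb : ‖x + b‖ = ‖x‖ := by
    rw [add_comm, IsUltrametricDist.norm_add_eq_max_of_norm_ne_norm
      (ne_of_lt (lt_of_le_of_lt hb hx)), max_eq_right (le_of_lt (lt_of_le_of_lt hb hx))]
  have hab : ‖a * b‖ < ‖x ^ 2‖ := by
    rw [norm_mul, norm_pow]
    calc ‖a‖ * ‖b‖ ≤ 1 * 1 := mul_le_mul ha hb (norm_nonneg b) one_pos.le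
    _ = 1 := by ring
    _ < ‖x‖ ^ 2 := one_lt_pow₀ hx two_ne_zero
  have hnum : ‖x ^ 2 + a * b‖ = ‖x‖ ^ 2 := by
    rw [IsUltrametricDist.norm_add_eq_max_of_norm_ne_norm (ne_of_gt hab),
      max_eq_left hab.le, norm_pow]
  have h4n : ‖(4:K)‖ ≤ 1 := by
    simpa using IsUltrametricDist.norm_natCast_le_one K 4
  have h40 : (0:ℝ) < ‖(4:K)‖ := norm_pos_iff.mpr h4
  have hne : 4 * x * (x - a) * (x + b) ≠ 0 := by
    apply mul_ne_zero (mul_ne_zero (mul_ne_zero h4 (norm_pos_iff.mp hx0)) _) _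
    · exact norm_pos_iff.mp (hxa ▸ hx0)
    exact norm_pos_iff.mp (hxb ▸ hx0)
  refine ⟨hne, ?_, ?_⟩
  · rw [norm_div, norm_pow, hnum, norm_mul, norm_mul, norm_mul, hxa, hxb]
    field_simp
  · rw [norm_div, norm_pow, hnum, norm_mul, norm_mul, norm_mul, hxa, hxb]
    rw [le_div_iff₀ (by positivity)]
    nlinarith [norm_nonneg x]
end
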